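/- arXiv:1508.07625 — 5 statements merged into one kernel-verified Lean document; each statement's English description precedes it below -/
import Mathlib

section
/- Fix an integer d ≥ 1. For θ = (θ_0, θ_1, θ_2, θ_3, θ_4) ∈ (ℂ^d)^5 and r = (r_0, …, r_4) ∈ ℂ^5, set c^i(t) = r_i·∏_{j=1}^d (t − θ_i^j) (i = 0,…,4) and h(t) = c^1(t)c^2(t) + c^3(t)c^4(t). Define G' : (ℂ^d)^5 × ℂ^5 → ℂ^{3d} × ℂ^5 × ℂ^{2d} by G'(θ, r) = (θ_0, θ_1, θ_2, r_0, …, r_4, (coeff_0(h), …, coeff_{2d−1}(h))), i.e. all coefficients of h except the leading one. Suppose the point (θ̃, y) satisfies: y_i ≠ 0 for all i; the 5d numbers θ̃_i^j are pairwise distinct; y_1y_2 + y_3y_4 ≠ 0 (so h has degree 2d); h has 2d pairwise distinct roots β_1, …, β_{2d}, all nonzero, none of which is a root of c^3 or of c^4; and c^3, c^4 are not proportional over ℂ. Then the Fréchet derivative over ℂ of G' at (θ̃, y) is a ℂ-linear isomorphism of ℂ^{5d+5}. -/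
/-!
The derivative is a linear map between spaces of the same dimension `5d + 5`, so it is enough
that its kernel is trivial. A tangent vector in the kernel has no `r`-component and no
`θ₀, θ₁, θ₂`-components, so, writing `Pᵢ = ∏ⱼ (X - θᵢʲ)` and `δPᵢ` for the first-order variation
of `Pᵢ` (a polynomial of degree `< d`), the variation of `h` is `y₃y₄ (δP₃ · P₄ + P₃ · δP₄)`.
This has degree `< 2d` and its coefficients below `2d` vanish, so it is zero. The roots of `P₃`
and `P₄` are distinct, so `P₃` and `P₄` are coprime; hence `P₃ ∣ δP₃`, which forces `δP₃ = 0`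
for degree reasons, and evaluating `δP₃ = -∑ⱼ δθ₃ʲ ∏_{m ≠ j} (X - θ₃ᵐ)` at the roots of `P₃`
gives `δθ₃ = 0`. The same holds for `θ₄`.
-/

open Polynomial Lagrange

namespace Polynomial

theorem eq_zero_of_degree_lt_of_coeff_eq_zero {R : Type*} [Semiring R] {p : R[X]} {n : ℕ}
    (hp : p.degree < n) (h : ∀ k < n, p.coeff k = 0) : p = 0 := by
  ext k
  by_cases hk : k < n
  · exact h k hk
  · exact coeff_eq_zero_of_degree_lt (hp.trans_le (by exact_mod_cast not_lt.1 hk))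

variable {𝕜 E F : Type*} [NontriviallyNormedField 𝕜] [CompleteSpace 𝕜]
  [NormedAddCommGroup E] [NormedSpace 𝕜 E] [FiniteDimensional 𝕜 E]
  [NormedAddCommGroup F] [NormedSpace 𝕜 F] [FiniteDimensional 𝕜 F]

/-- `𝕜[X]` carries no topology, so polynomial-valued maps are differentiated coefficientwise. -/
def HasCoeffFDerivAt (f : E → 𝕜[X]) (f' : E →ₗ[𝕜] 𝕜[X]) (x : E) : Prop :=
  ∀ n, HasFDerivAt (fun y => (f y).coeff n)
    (LinearMap.toContinuousLinearMap (lcoeff 𝕜 n ∘ₗ f')) x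

theorem hasCoeffFDerivAt_const {x : E} (p : 𝕜[X]) : HasCoeffFDerivAt (fun _ : E => p) 0 x :=
  fun n => by simpa using hasFDerivAt_const (p.coeff n) x

theorem _root_.HasFDerivAt.hasCoeffFDerivAt_C {a : E → 𝕜} {a' : E →L[𝕜] 𝕜} {x : E}
    (ha : HasFDerivAt a a' x) :
    HasCoeffFDerivAt (fun y => C (a y)) ((a' : E →ₗ[𝕜] 𝕜).smulRight 1) x := by
  rintro (_ | n)
  · simp only [coeff_C_zero]
    exact ha.congr_fderiv (ContinuousLinearMap.ext fun v => by simp)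
  · convert hasFDerivAt_const (0 : 𝕜) x using 1
    · ext y; simp
    · ext v; simp [coeff_one]

namespace HasCoeffFDerivAt

variable {f g : E → 𝕜[X]} {f' g' : E →ₗ[𝕜] 𝕜[X]} {x : E}

theorem hasFDerivAt_coeffs (hf : HasCoeffFDerivAt f f' x) (N : ℕ) :
    HasFDerivAt (fun y (k : Fin N) => (f y).coeff k)
      (ContinuousLinearMap.pi fun k : Fin N =>
        LinearMap.toContinuousLinearMap (lcoeff 𝕜 k ∘ₗ f')) x :=
  hasFDerivAt_pi.2 fun k => hf k

theorem add (hf : HasCoeffFDerivAt f f' x) (hg : HasCoeffFDerivAt g g' x) :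
    HasCoeffFDerivAt (fun y => f y + g y) (f' + g') x := fun n =>
  ((hf n).fun_add (hg n)).congr_fderiv (ContinuousLinearMap.ext fun v => by simp)

theorem sub (hf : HasCoeffFDerivAt f f' x) (hg : HasCoeffFDerivAt g g' x) :
    HasCoeffFDerivAt (fun y => f y - g y) (f' - g') x := fun n => by
  simp only [coeff_sub]
  exact ((hf n).fun_sub (hg n)).congr_fderiv (ContinuousLinearMap.ext fun v => by simp)

theorem mul (hf : HasCoeffFDerivAt f f' x) (hg : HasCoeffFDerivAt g g' x) :
    HasCoeffFDerivAt (fun y => f y * g y)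
      (LinearMap.mulLeft 𝕜 (f x) ∘ₗ g' + LinearMap.mulRight 𝕜 (g x) ∘ₗ f') x := fun n => by
  simp only [coeff_mul]
  refine (HasFDerivAt.fun_sum fun ij _ => (hf ij.1).fun_mul (hg ij.2)).congr_fderiv ?_
  ext v
  simp only [add_apply, sum_apply, smul_apply, LinearMap.coe_toContinuousLinearMap',
    LinearMap.coe_comp, Function.comp_apply, lcoeff_apply, smul_eq_mul, LinearMap.add_apply,
    LinearMap.mulLeft_apply, LinearMap.mulRight_apply, coeff_add, coeff_mul,
    Finset.sum_add_distrib]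
  exact congrArg _ (Finset.sum_congr rfl fun _ _ => mul_comm _ _)

theorem comp {g : F → E} {g' : F →L[𝕜] E} {z : F} (hf : HasCoeffFDerivAt f f' (g z))
    (hg : HasFDerivAt g g' z) : HasCoeffFDerivAt (f ∘ g) (f' ∘ₗ (g' : F →ₗ[𝕜] E)) z :=
  fun n => (hf n).comp z hg

theorem finset_prod {ι : Type*} [DecidableEq ι] {f : ι → E → 𝕜[X]} {f' : ι → E →ₗ[𝕜] 𝕜[X]}
    {s : Finset ι} (hf : ∀ i ∈ s, HasCoeffFDerivAt (f i) (f' i) x) :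
    HasCoeffFDerivAt (fun y => ∏ i ∈ s, f i y)
      (∑ i ∈ s, LinearMap.mulLeft 𝕜 (∏ j ∈ s.erase i, f j x) ∘ₗ f' i) x := by
  induction s using Finset.induction_on with
  | empty => simpa using hasCoeffFDerivAt_const (1 : 𝕜[X])
  | insert a s ha ih =>
    simp only [Finset.prod_insert ha]
    convert (hf a (s.mem_insert_self a)).mul (ih fun i hi => hf i (s.mem_insert_of_mem hi))
      using 1
    ext v : 1
    simp only [LinearMap.coe_comp, LinearMap.add_apply, LinearMap.coe_sum, Finset.sum_apply,
      Function.comp_apply, LinearMap.mulLeft_apply, LinearMap.mulRight_apply,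
      Finset.sum_insert ha, Finset.erase_insert ha, Finset.mul_sum]
    rw [add_comm, mul_comm]
    congr 1
    refine Finset.sum_congr rfl fun i hi => ?_
    rw [Finset.erase_insert_of_ne (ne_of_mem_of_not_mem hi ha).symm,
      Finset.prod_insert fun h => ha (Finset.mem_of_mem_erase h), mul_assoc]

end HasCoeffFDerivAt

end Polynomial

theorem IsCoprime.eq_zero_of_mul_add_mul_eq_zero {K : Type*} [Field K] {P Q A B : K[X]}
    (hPQ : IsCoprime P Q) (hA : A.degree < P.degree) (hB : B.degree < Q.degree)
    (h : A * Q + P * B = 0) : A = 0 ∧ B = 0 := by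
  have hPA : P ∣ A := hPQ.dvd_of_dvd_mul_right ⟨-B, by linear_combination h⟩
  have hQB : Q ∣ B := hPQ.symm.dvd_of_dvd_mul_left ⟨-A, by linear_combination h⟩
  exact ⟨eq_zero_of_dvd_of_degree_lt hPA hA, eq_zero_of_dvd_of_degree_lt hQB hB⟩

namespace Lagrange

variable {K ι : Type*} [Field K]

theorem isCoprime_nodal {s t : Finset ι} {v w : ι → K} (h : ∀ i ∈ s, ∀ j ∈ t, v i ≠ w j) :
    IsCoprime (nodal s v) (nodal t w) :=
  IsCoprime.prod_left fun i hi => IsCoprime.prod_right fun j hj =>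
    isCoprime_X_sub_C_of_isUnit_sub (sub_ne_zero.2 (h i hi j hj)).isUnit

variable [Fintype ι] [DecidableEq ι]

noncomputable def nodalDeriv (v : ι → K) : (ι → K) →ₗ[K] K[X] :=
  -∑ i, (LinearMap.proj i).smulRight (nodal (Finset.univ.erase i) v)

theorem nodalDeriv_apply (v δ : ι → K) :
    nodalDeriv v δ = -∑ i, δ i • nodal (Finset.univ.erase i) v := by
  simp [nodalDeriv]

theorem degree_nodalDeriv_lt (v δ : ι → K) : (nodalDeriv v δ).degree < Fintype.card ι := by
  rw [nodalDeriv_apply, degree_neg]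
  refine (degree_sum_le _ _).trans_lt
    ((Finset.sup_lt_iff (WithBot.bot_lt_coe _)).2 fun i _ => (degree_smul_le _ _).trans_lt ?_)
  rw [degree_nodal, Finset.card_erase_of_mem (Finset.mem_univ i), Finset.card_univ]
  have : 0 < Fintype.card ι := Fintype.card_pos_iff.2 ⟨i⟩
  exact_mod_cast Nat.sub_lt this zero_lt_one

theorem nodalDeriv_injective {v : ι → K} (hv : Function.Injective v) :
    Function.Injective (nodalDeriv v) := by
  refine (injective_iff_map_eq_zero _).2 fun δ hδ => funext fun m => ?_
  have hm := congrArg (eval (v m)) hδ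
  rw [nodalDeriv_apply, eval_neg, eval_finsetSum, eval_zero, neg_eq_zero,
    Finset.sum_eq_single m (fun i _ him => by
      rw [eval_smul, eval_nodal_at_node (Finset.mem_erase.2 ⟨Ne.symm him, Finset.mem_univ m⟩),
        smul_zero]) (by simp), eval_smul, smul_eq_mul] at hm
  exact (mul_eq_zero.1 hm).resolve_right
    (eval_nodal_not_at_node fun i hi => hv.ne (Finset.ne_of_mem_erase hi).symm)

theorem eq_zero_of_deriv_nodal_mul_nodal_coeff_eq_zero {x z : ι → K}
    (hx : Function.Injective x) (hz : Function.Injective z) (hxz : ∀ i j, x i ≠ z j)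
    {δ ε : ι → K}
    (h : ∀ k < 2 * Fintype.card ι,
      (nodalDeriv x δ * nodal Finset.univ z + nodal Finset.univ x * nodalDeriv z ε).coeff k = 0) :
    δ = 0 ∧ ε = 0 := by
  have hdeg :
      (nodalDeriv x δ * nodal Finset.univ z + nodal Finset.univ x * nodalDeriv z ε).degree
        < ↑(2 * Fintype.card ι) := by
    rw [two_mul, Nat.cast_add]
    refine (degree_add_le _ _).trans_lt (max_lt ?_ ?_)
    · rw [degree_mul, degree_nodal, Finset.card_univ]
      exact WithBot.add_lt_add_right WithBot.coe_ne_bot (degree_nodalDeriv_lt x δ)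
    · rw [degree_mul, degree_nodal, Finset.card_univ]
      exact WithBot.add_lt_add_left WithBot.coe_ne_bot (degree_nodalDeriv_lt z ε)
  obtain ⟨hδ, hε⟩ := (isCoprime_nodal fun i _ j _ => hxz i j).eq_zero_of_mul_add_mul_eq_zero
    (by rw [degree_nodal, Finset.card_univ]; exact degree_nodalDeriv_lt x δ)
    (by rw [degree_nodal, Finset.card_univ]; exact degree_nodalDeriv_lt z ε)
    (eq_zero_of_degree_lt_of_coeff_eq_zero hdeg h)
  exact ⟨nodalDeriv_injective hx (hδ.trans (map_zero _).symm),
    nodalDeriv_injective hz (hε.trans (map_zero _).symm)⟩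

theorem hasCoeffFDerivAt_nodal {𝕜 : Type*} [NontriviallyNormedField 𝕜] [CompleteSpace 𝕜]
    (v : ι → 𝕜) : HasCoeffFDerivAt (fun w : ι → 𝕜 => nodal Finset.univ w) (nodalDeriv v) v := by
  convert HasCoeffFDerivAt.finset_prod (s := Finset.univ) (f := fun i (w : ι → 𝕜) => X - C (w i))
    fun i _ => (hasCoeffFDerivAt_const X).sub (hasFDerivAt_apply i v).hasCoeffFDerivAt_C using 1
  · rfl
  · refine LinearMap.ext fun δ => ?_
    simp [nodalDeriv_apply, nodal, smul_eq_C_mul, mul_comm]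

end Lagrange

section RootPoly

variable {K κ ι : Type*} [Field K] [Fintype ι]

noncomputable def rootPoly (p : (κ → ι → K) × (κ → K)) (i : κ) : K[X] :=
  C (p.2 i) * nodal Finset.univ (p.1 i)

noncomputable def rootPolyDeriv [DecidableEq ι] (p : (κ → ι → K) × (κ → K)) (i : κ) :
    (κ → ι → K) × (κ → K) →ₗ[K] K[X] :=
  LinearMap.mulLeft K (C (p.2 i)) ∘ₗ nodalDeriv (p.1 i) ∘ₗ LinearMap.proj i ∘ₗ
      LinearMap.fst _ _ _ +
    (LinearMap.proj i ∘ₗ LinearMap.snd _ _ _).smulRight (nodal Finset.univ (p.1 i))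

theorem rootPolyDeriv_apply [DecidableEq ι] (p v : (κ → ι → K) × (κ → K)) (i : κ) :
    rootPolyDeriv p i v =
      C (p.2 i) * nodalDeriv (p.1 i) (v.1 i) + C (v.2 i) * nodal Finset.univ (p.1 i) := by
  simp [rootPolyDeriv, smul_eq_C_mul]

theorem hasCoeffFDerivAt_rootPoly {𝕜 : Type*} [NontriviallyNormedField 𝕜] [CompleteSpace 𝕜]
    [Fintype κ] [DecidableEq ι] (p : (κ → ι → 𝕜) × (κ → 𝕜)) (i : κ) :
    HasCoeffFDerivAt (rootPoly · i) (rootPolyDeriv p i) p := by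
  have hr : HasFDerivAt (fun q : (κ → ι → 𝕜) × (κ → 𝕜) => q.2 i)
      ((ContinuousLinearMap.proj i).comp (ContinuousLinearMap.snd 𝕜 _ _)) p := by
    fun_prop
  have hθ : HasFDerivAt (fun q : (κ → ι → 𝕜) × (κ → 𝕜) => q.1 i)
      ((ContinuousLinearMap.proj i).comp (ContinuousLinearMap.fst 𝕜 _ _)) p := by
    fun_prop
  convert hr.hasCoeffFDerivAt_C.mul
    ((hasCoeffFDerivAt_nodal (p.1 i)).comp (g := fun q : (κ → ι → 𝕜) × (κ → 𝕜) => q.1 i) hθ)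
    using 1
  · rfl
  · refine LinearMap.ext fun v => ?_
    simp [rootPolyDeriv_apply, smul_eq_C_mul]

end RootPoly

section CoeffChart

variable {K : Type*} [Field K] {d : ℕ}

noncomputable def quadPoly (p : (Fin 5 → Fin d → K) × (Fin 5 → K)) : K[X] :=
  rootPoly p 1 * rootPoly p 2 + rootPoly p 3 * rootPoly p 4

noncomputable def quadPolyDeriv (p : (Fin 5 → Fin d → K) × (Fin 5 → K)) :
    (Fin 5 → Fin d → K) × (Fin 5 → K) →ₗ[K] K[X] :=
  (LinearMap.mulLeft K (rootPoly p 1) ∘ₗ rootPolyDeriv p 2 +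
      LinearMap.mulRight K (rootPoly p 2) ∘ₗ rootPolyDeriv p 1) +
    (LinearMap.mulLeft K (rootPoly p 3) ∘ₗ rootPolyDeriv p 4 +
      LinearMap.mulRight K (rootPoly p 4) ∘ₗ rootPolyDeriv p 3)

noncomputable def coeffChart (p : (Fin 5 → Fin d → K) × (Fin 5 → K)) :
    (Fin 3 → Fin d → K) × (Fin 5 → K) × (Fin (2 * d) → K) :=
  (fun i => p.1 (Fin.castLE (by norm_num) i), p.2, fun k => (quadPoly p).coeff k)

noncomputable def coeffChartDeriv (p : (Fin 5 → Fin d → K) × (Fin 5 → K)) :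
    (Fin 5 → Fin d → K) × (Fin 5 → K) →ₗ[K]
      (Fin 3 → Fin d → K) × (Fin 5 → K) × (Fin (2 * d) → K) :=
  (LinearMap.funLeft K (Fin d → K) (Fin.castLE (by norm_num)) ∘ₗ LinearMap.fst _ _ _).prod
    ((LinearMap.snd _ _ _).prod (LinearMap.pi fun k : Fin (2 * d) => lcoeff K k ∘ₗ quadPolyDeriv p))

theorem hasFDerivAt_coeffChart {𝕜 : Type*} [NontriviallyNormedField 𝕜] [CompleteSpace 𝕜]
    (p : (Fin 5 → Fin d → 𝕜) × (Fin 5 → 𝕜)) :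
    HasFDerivAt coeffChart (LinearMap.toContinuousLinearMap (coeffChartDeriv p)) p := by
  have hquad : HasCoeffFDerivAt quadPoly (quadPolyDeriv p) p :=
    ((hasCoeffFDerivAt_rootPoly p 1).mul (hasCoeffFDerivAt_rootPoly p 2)).add
      ((hasCoeffFDerivAt_rootPoly p 3).mul (hasCoeffFDerivAt_rootPoly p 4))
  have hθ := (LinearMap.toContinuousLinearMap
    (LinearMap.funLeft 𝕜 (Fin d → 𝕜) (Fin.castLE (by norm_num : 3 ≤ 5)) ∘ₗ
      LinearMap.fst 𝕜 (Fin 5 → Fin d → 𝕜) (Fin 5 → 𝕜))).hasFDerivAt (x := p)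
  exact hθ.prodMk (hasFDerivAt_snd.prodMk (hquad.hasFDerivAt_coeffs _))

theorem coeffChartDeriv_injective {θ : Fin 5 → Fin d → K} {y : Fin 5 → K}
    (hy : ∀ i, y i ≠ 0) (hθ : Function.Injective fun q : Fin 5 × Fin d => θ q.1 q.2) :
    Function.Injective (coeffChartDeriv (θ, y)) := by
  refine (injective_iff_map_eq_zero _).2 fun v hv => ?_
  have hθv (i : Fin 3) : v.1 (Fin.castLE (by norm_num) i) = 0 :=
    congrFun (congrArg Prod.fst hv) i
  have hrv : v.2 = 0 := congrArg (fun w => w.2.1) hv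
  have hcoeff (k : Fin (2 * d)) : (quadPolyDeriv (θ, y) v).coeff k = 0 :=
    congrFun (congrArg (fun w => w.2.2) hv) k
  have hderiv : quadPolyDeriv (θ, y) v = C (y 3 * y 4) *
      (nodalDeriv (θ 3) (v.1 3) * nodal Finset.univ (θ 4) +
        nodal Finset.univ (θ 3) * nodalDeriv (θ 4) (v.1 4)) := by
    have hv1 : v.1 1 = 0 := hθv 1
    have hv2 : v.1 2 = 0 := hθv 2
    simp only [quadPolyDeriv, LinearMap.add_apply, LinearMap.coe_comp, Function.comp_apply,
      LinearMap.mulLeft_apply, LinearMap.mulRight_apply, rootPolyDeriv_apply, rootPoly, hv1, hv2,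
      hrv, map_zero, Pi.zero_apply, mul_zero, zero_mul, add_zero, zero_add, map_mul]
    ring
  have hrow (i : Fin 5) : Function.Injective (θ i) := fun a b hab => (Prod.mk.inj (hθ hab)).2
  obtain ⟨hv3, hv4⟩ := eq_zero_of_deriv_nodal_mul_nodal_coeff_eq_zero (hrow 3) (hrow 4)
    (fun a b hab => absurd (Prod.mk.inj (hθ hab)).1 (by decide)) fun k hk => by
      have := hcoeff ⟨k, by simpa using hk⟩
      rwa [hderiv, coeff_C_mul, mul_eq_zero, or_iff_right (mul_ne_zero (hy 3) (hy 4))] at this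
  refine Prod.ext (funext fun i => ?_) hrv
  fin_cases i
  exacts [hθv 0, hθv 1, hθv 2, hv3, hv4]

theorem finrank_coeffChart_source_eq_target :
    Module.finrank K ((Fin 5 → Fin d → K) × (Fin 5 → K)) =
      Module.finrank K ((Fin 3 → Fin d → K) × (Fin 5 → K) × (Fin (2 * d) → K)) := by
  simp only [Module.finrank_prod, Module.finrank_pi_fintype, Fintype.card_fin, Finset.sum_const,
    Finset.card_univ, smul_eq_mul]
  ring

end CoeffChart

theorem stmt2 (d : ℕ)
    (θ : Fin 5 → Fin d → ℂ) (y : Fin 5 → ℂ)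
    (hy : ∀ i, y i ≠ 0)
    (hθ : Function.Injective (fun p : Fin 5 × Fin d => θ p.1 p.2)) :
    Function.Bijective
      (fderiv ℂ
        (fun p : (Fin 5 → Fin d → ℂ) × (Fin 5 → ℂ) =>
          ((fun i : Fin 3 => p.1 (Fin.castLE (by norm_num) i),
            p.2,
            fun k : Fin (2 * d) =>
              ((Polynomial.C (p.2 1) * ∏ j, (Polynomial.X - Polynomial.C (p.1 1 j))) *
                  (Polynomial.C (p.2 2) * ∏ j, (Polynomial.X - Polynomial.C (p.1 2 j))) +
                (Polynomial.C (p.2 3) * ∏ j, (Polynomial.X - Polynomial.C (p.1 3 j))) *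
                  (Polynomial.C (p.2 4) * ∏ j, (Polynomial.X - Polynomial.C (p.1 4 j)))).coeff k) :
            (Fin 3 → Fin d → ℂ) × (Fin 5 → ℂ) × (Fin (2 * d) → ℂ)))
        (θ, y)) := by
  show Function.Bijective (fderiv ℂ coeffChart (θ, y))
  rw [(hasFDerivAt_coeffChart (θ, y)).fderiv]
  have hinj := coeffChartDeriv_injective hy hθ
  exact ⟨hinj, (LinearMap.injective_iff_surjective_of_finrank_eq_finrank
    finrank_coeffChart_source_eq_target).1 hinj⟩
end

section
/- Let d ≥ 1 and let c^3, c^4 ∈ ℂ[t] be polynomials of degree at most d that are linearly independent over ℂ. Let β_1, …, β_{2d} be pairwise distinct complex numbers with c^4(β_i) ≠ 0 for every i. Then there exists a permutation σ of {1, …, 2d} such that for every i = 1, …, d, c^3(β_{σ(d+i)})·c^4(β_{σ(i)}) − c^3(β_{σ(i)})·c^4(β_{σ(d+i)}) ≠ 0. -/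
open Polynomial

/-- Let `c³, c⁴ ∈ ℂ[t]` have degree at most `d` and be linearly
independent over `ℂ`, and let `β₁, …, β_{2d}` be pairwise distinct complex numbers
with `c⁴(β_i) ≠ 0` for every `i`.  Then the indices can be permuted so that
`c³(β_{σ(d+i)})·c⁴(β_{σ(i)}) − c³(β_{σ(i)})·c⁴(β_{σ(d+i)}) ≠ 0` for every `i = 1, …, d`. -/
theorem stmt4 (d : ℕ) (hd : 1 ≤ d) (c₃ c₄ : Polynomial ℂ)
    (h₃ : c₃.natDegree ≤ d) (h₄ : c₄.natDegree ≤ d)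
    (hli : LinearIndependent ℂ ![c₃, c₄])
    (β : Fin (2 * d) → ℂ) (hβinj : Function.Injective β)
    (hβ4 : ∀ i, c₄.eval (β i) ≠ 0) :
    ∃ σ : Equiv.Perm (Fin (2 * d)), ∀ i : Fin d,
      c₃.eval (β (σ ⟨d + i.1, by have := i.2; omega⟩)) *
          c₄.eval (β (σ ⟨i.1, by have := i.2; omega⟩)) -
        c₃.eval (β (σ ⟨i.1, by have := i.2; omega⟩)) *
          c₄.eval (β (σ ⟨d + i.1, by have := i.2; omega⟩)) ≠ 0 := by
  set f : Fin (2 * d) → ℂ := fun i => c₃.eval (β i) / c₄.eval (β i) with hf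
  set g : Fin (2 * d) → Lex (ℝ × ℝ) := fun i => toLex ((f i).re, (f i).im) with hg
  -- g determines f
  have hgf : ∀ i j, g i = g j → f i = f j := by
    intro i j h
    have h' := toLex.injective h
    exact Complex.ext (congrArg Prod.fst h') (congrArg Prod.snd h')
  refine ⟨Tuple.sort g, fun i => ?_⟩
  set σ : Equiv.Perm (Fin (2 * d)) := Tuple.sort g with hσ
  set x : Fin (2 * d) := σ ⟨d + i.1, by have := i.2; omega⟩ with hx
  set y : Fin (2 * d) := σ ⟨i.1, by have := i.2; omega⟩ with hy
  intro hcontra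
  -- From the vanishing determinant, f x = f y
  have hfxy : f x = f y := by
    rw [hf]
    rw [div_eq_div_iff (hβ4 x) (hβ4 y)]
    linear_combination hcontra
  -- the polynomial whose roots are the fiber of f at f y
  set P : Polynomial ℂ := C (c₄.eval (β y)) * c₃ - C (c₃.eval (β y)) * c₄ with hP
  have hPne : P ≠ 0 := by
    intro h0
    have h0' : (c₄.eval (β y)) • c₃ + (-(c₃.eval (β y))) • c₄ = 0 := by
      simp only [smul_eq_C_mul, map_neg]
      rw [hP] at h0
      linear_combination h0
    rcases (LinearIndependent.pair_iff.mp hli) _ _ h0' with ⟨h1, _⟩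
    exact hβ4 y h1
  have hPdeg : P.natDegree ≤ d := by
    apply le_trans (natDegree_sub_le _ _)
    simp only [max_le_iff]
    constructor
    · exact le_trans (natDegree_C_mul_le _ _) h₃
    · exact le_trans (natDegree_C_mul_le _ _) h₄
  -- elements with f = f y are roots of P
  have hroot : ∀ z : Fin (2 * d), f z = f y → P.eval (β z) = 0 := by
    intro z hz
    have hz' : c₃.eval (β z) * c₄.eval (β y) = c₃.eval (β y) * c₄.eval (β z) := by
      rw [hf] at hz
      rw [div_eq_div_iff (hβ4 z) (hβ4 y)] at hz
      exact hz
    simp only [hP, eval_sub, eval_mul, eval_C]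
    linear_combination hz'
  -- monotone sorted values
  have hmono : Monotone (g ∘ σ) := Tuple.monotone_sort g
  -- all j between ⟨i⟩ and ⟨d+i⟩ give f (σ j) = f y
  have hband : ∀ j : Fin (2 * d),
      (⟨i.1, by have := i.2; omega⟩ : Fin (2 * d)) ≤ j →
      j ≤ (⟨d + i.1, by have := i.2; omega⟩ : Fin (2 * d)) → f (σ j) = f y := by
    intro j hj1 hj2
    have h1 : g y ≤ g (σ j) := hmono hj1
    have h2 : g (σ j) ≤ g x := hmono hj2
    rw [show g x = g y by
      simp only [hg, hfxy]] at h2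
    exact hgf _ _ (le_antisymm h2 h1)
  -- count: d+1 distinct roots of P, but P has at most d roots
  have hcard : (Finset.Icc (⟨i.1, by have := i.2; omega⟩ : Fin (2 * d))
      (⟨d + i.1, by have := i.2; omega⟩ : Fin (2 * d))).card = d + 1 := by
    rw [Fin.card_Icc]
    simp only [Fin.val_mk]
    omega
  have hinj : Set.InjOn (fun j => β (σ j))
      ↑(Finset.Icc (⟨i.1, by have := i.2; omega⟩ : Fin (2 * d))
      (⟨d + i.1, by have := i.2; omega⟩ : Fin (2 * d))) := by
    intro a _ b _ hab
    exact σ.injective (hβinj hab)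
  have hmaps : ∀ j ∈ Finset.Icc (⟨i.1, by have := i.2; omega⟩ : Fin (2 * d))
      (⟨d + i.1, by have := i.2; omega⟩ : Fin (2 * d)),
      (fun j => β (σ j)) j ∈ P.roots.toFinset := by
    intro j hj
    rw [Finset.mem_Icc] at hj
    rw [Multiset.mem_toFinset, mem_roots hPne]
    exact hroot _ (hband j hj.1 hj.2)
  have hle : d + 1 ≤ P.roots.toFinset.card := by
    rw [← hcard]
    exact Finset.card_le_card_of_injOn _ hmaps hinj
  have : P.roots.toFinset.card ≤ d :=
    le_trans (Multiset.toFinset_card_le _) (le_trans (P.card_roots' ) hPdeg)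
  omega
end

section
/- Let d ≥ 1 and let c^2, c^3, c^4 ∈ ℂ[t] be polynomials of degree d such that the product c^2·c^3·c^4 has 3d pairwise distinct roots (equivalently, each c^i has d simple roots and the three polynomials are pairwise coprime). Then there exist t_1, t_2 ∈ ℂ such that the 3×3 determinant det [[1, 1, 1], [c^2(t_1)^5, c^3(t_1)^5, c^4(t_1)^5], [c^2(t_2)^5, c^3(t_2)^5, c^4(t_2)^5]] is nonzero. -/
/-! If the determinant vanished for all `t₁, t₂`, then subtracting the first column from the
others shows `A(t₁) B(t₂) = B(t₁) A(t₂)` for `A = c₃⁵ - c₂⁵`, `B = c₄⁵ - c₂⁵`, so `A` and `B` are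
proportional: `c₂⁵, c₃⁵, c₄⁵` satisfy a nontrivial linear relation. Since `c₂ c₃ c₄` has only
simple roots, the `cᵢ` are pairwise coprime, and for pairwise coprime nonconstant polynomials
such a relation is ruled out by the Fermat–Catalan theorem for polynomials (a consequence of
Mason–Stothers) when all coefficients are nonzero, and by coprimality otherwise. -/

open Polynomial

namespace Polynomial

theorem nodup_roots_of_injective_isRoot {R ι : Type*} [CommRing R] [IsDomain R] [Fintype ι]
    {p : R[X]} {β : ι → R} (hβ : Function.Injective β) (hroot : ∀ i, p.IsRoot (β i))
    (hdeg : p.natDegree ≤ Fintype.card ι) : p.roots.Nodup := by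
  classical
  rcases eq_or_ne p 0 with rfl | hp
  · simp
  set S := Finset.univ.image β
  have hS : S.val ≤ p.roots :=
    (Multiset.le_iff_subset S.nodup).mpr fun x hx => by
      obtain ⟨i, -, rfl⟩ := Finset.mem_image.mp hx
      exact (mem_roots hp).mpr (hroot i)
  have hcard : p.roots.card ≤ S.card := by
    rw [Finset.card_image_of_injective _ hβ, Finset.card_univ]
    exact (card_roots' p).trans hdeg
  exact Multiset.eq_of_le_of_card_le hS hcard ▸ S.nodup

theorem separable_of_injective_isRoot {k ι : Type*} [Field k] [IsAlgClosed k] [Fintype ι]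
    {p : k[X]} (hp : p ≠ 0) {β : ι → k} (hβ : Function.Injective β)
    (hroot : ∀ i, p.IsRoot (β i)) (hdeg : p.natDegree ≤ Fintype.card ι) : p.Separable :=
  (nodup_roots_iff_of_splits hp (IsAlgClosed.splits p)).mp
    (nodup_roots_of_injective_isRoot hβ hroot hdeg)

theorem exists_C_mul_add_C_mul_eq_zero {R : Type*} [CommRing R] [IsDomain R] [Infinite R]
    {f g : R[X]} (h : ∀ s t, f.eval s * g.eval t = g.eval s * f.eval t) :
    ∃ u v : R, (u ≠ 0 ∨ v ≠ 0) ∧ C u * f + C v * g = 0 := by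
  by_cases hg : ∃ s, g.eval s ≠ 0
  · obtain ⟨s, hs⟩ := hg
    refine ⟨g.eval s, -f.eval s, .inl hs, Polynomial.funext fun t => ?_⟩
    simp only [eval_add, eval_mul, eval_C, eval_zero]
    linear_combination -h s t
  · push Not at hg
    have hg0 : g = 0 := Polynomial.funext fun t => by simpa using hg t
    exact ⟨0, 1, .inr one_ne_zero, by simp [hg0]⟩

variable {k : Type*} [Field k] {n : ℕ} {a b c : k[X]}

theorem eq_zero_of_C_mul_pow_add_C_mul_pow_eq_zero (hn : n ≠ 0) (ha : a.natDegree ≠ 0)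
    (hab : IsCoprime a b) {u v : k} (h : C u * a ^ n + C v * b ^ n = 0) :
    u = 0 ∧ v = 0 := by
  have hv : v = 0 := by
    by_contra hv
    have hdvd : a ∣ C v * b ^ n := by
      rw [eq_neg_of_add_eq_zero_right h]
      exact ((dvd_pow_self a hn).mul_left _).neg_right
    have hcop : IsCoprime a (C v * b ^ n) :=
      (isCoprime_mul_unit_left_right (isUnit_C.mpr (Ne.isUnit hv)) _ _).mpr hab.pow_right
    exact ha (natDegree_eq_zero_of_isUnit (hcop.isUnit_of_dvd' dvd_rfl hdvd))
  have ha0 : a ≠ 0 := by rintro rfl; simp at ha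
  subst hv
  simpa [ha0] using h

theorem eq_zero_of_C_mul_pow_add_C_mul_pow_add_C_mul_pow_eq_zero (hn : 3 ≤ n)
    (chn : (n : k) ≠ 0)
    (ha : a.natDegree ≠ 0) (hb : b.natDegree ≠ 0) (hc : c ≠ 0)
    (hab : IsCoprime a b) (hac : IsCoprime a c) (hbc : IsCoprime b c) {u v w : k}
    (h : C u * a ^ n + C v * b ^ n + C w * c ^ n = 0) : u = 0 ∧ v = 0 ∧ w = 0 := by
  have hn0 : n ≠ 0 := by omega
  have ha0 : a ≠ 0 := by rintro rfl; simp at ha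
  have hb0 : b ≠ 0 := by rintro rfl; simp at hb
  by_cases hu : u = 0
  · subst hu
    obtain ⟨hv, hw⟩ := eq_zero_of_C_mul_pow_add_C_mul_pow_eq_zero hn0 hb hbc (by simpa using h)
    exact ⟨rfl, hv, hw⟩
  by_cases hv : v = 0
  · subst hv
    obtain ⟨hu, hw⟩ := eq_zero_of_C_mul_pow_add_C_mul_pow_eq_zero hn0 ha hac (by simpa using h)
    exact ⟨hu, rfl, hw⟩
  by_cases hw : w = 0
  · subst hw
    obtain ⟨hu, hv⟩ := eq_zero_of_C_mul_pow_add_C_mul_pow_eq_zero hn0 ha hab (by simpa using h)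
    exact ⟨hu, hv, rfl⟩
  have hineq : n * n + n * n + n * n ≤ n * n * n := by nlinarith
  exact (ha (flt_catalan hn0 hn0 hn0 hineq chn chn chn ha0 hb0 hc hab hu hv hw h).1).elim

end Polynomial

/-- non-vanishing of `Jac(f_Fe, c)` for the Fermat quintic.
Let `c², c³, c⁴ ∈ ℂ[t]` have degree `d` and suppose the product `c²·c³·c⁴` has `3d`
pairwise distinct roots.  Then there exist `t₁, t₂ ∈ ℂ` such that the determinant
`det [[1,1,1],[c²(t₁)⁵, c³(t₁)⁵, c⁴(t₁)⁵],[c²(t₂)⁵, c³(t₂)⁵, c⁴(t₂)⁵]]` is nonzero. -/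
theorem stmt7 (d : ℕ) (hd : 1 ≤ d) (c₂ c₃ c₄ : Polynomial ℂ)
    (h₂ : c₂.natDegree = d) (h₃ : c₃.natDegree = d) (h₄ : c₄.natDegree = d)
    (β : Fin (3 * d) → ℂ) (hβinj : Function.Injective β)
    (hβroot : ∀ i, (c₂ * c₃ * c₄).eval (β i) = 0) :
    ∃ t₁ t₂ : ℂ,
      Matrix.det
        !![(1 : ℂ), 1, 1;
           (c₂.eval t₁) ^ 5, (c₃.eval t₁) ^ 5, (c₄.eval t₁) ^ 5;
           (c₂.eval t₂) ^ 5, (c₃.eval t₂) ^ 5, (c₄.eval t₂) ^ 5] ≠ 0 := by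
  have hc₂ : c₂ ≠ 0 := ne_zero_of_natDegree_gt (h₂ ▸ hd)
  have hc₃ : c₃ ≠ 0 := ne_zero_of_natDegree_gt (h₃ ▸ hd)
  have hc₄ : c₄ ≠ 0 := ne_zero_of_natDegree_gt (h₄ ▸ hd)
  have hsep : (c₂ * c₃ * c₄).Separable := by
    refine separable_of_injective_isRoot ?_ hβinj hβroot ?_
    · exact mul_ne_zero (mul_ne_zero hc₂ hc₃) hc₄
    · rw [natDegree_mul (mul_ne_zero hc₂ hc₃) hc₄, natDegree_mul hc₂ hc₃, Fintype.card_fin]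
      omega
  have h₂₃ : IsCoprime c₂ c₃ := hsep.of_mul_left.isCoprime
  have h₂₃₄ : IsCoprime (c₂ * c₃) c₄ := hsep.isCoprime
  by_contra! hdet
  obtain ⟨u, v, huv, hrel⟩ := exists_C_mul_add_C_mul_eq_zero (f := c₃ ^ 5 - c₂ ^ 5)
    (g := c₄ ^ 5 - c₂ ^ 5) fun s t => by
      have hst := hdet s t
      simp only [Matrix.det_fin_three, Matrix.of_apply, Matrix.cons_val', Matrix.cons_val_zero,
        Matrix.cons_val_fin_one, Matrix.cons_val_one, one_mul, Matrix.cons_val] at hst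
      simp only [eval_sub, eval_pow]
      linear_combination hst
  have hrel' : C u * c₃ ^ 5 + C v * c₄ ^ 5 + C (-(u + v)) * c₂ ^ 5 = 0 := by
    rw [← hrel]; simp only [map_neg, map_add]; ring
  obtain ⟨hu, hv, -⟩ := eq_zero_of_C_mul_pow_add_C_mul_pow_add_C_mul_pow_eq_zero (by norm_num)
    (by norm_num) (by omega) (by omega) hc₂ h₂₃₄.of_mul_left_right h₂₃.symm
    h₂₃₄.of_mul_left_left.symm hrel'
  exact huv.elim (· hu) (· hv)
end

section
/- Let d ≥ 1 and let c^2, c^3, c^4 ∈ ℂ[t] be polynomials of degree d such that the product c^2·c^3·c^4 has 3d pairwise distinct roots (equivalently, each c^i has d simple roots and the three polynomials are pairwise coprime). Then the polynomials (c^3)^5 − (c^2)^5 and (c^4)^5 − (c^2)^5 are linearly independent over ℂ. -/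
/-!
A linear relation `a (c₃⁵ - c₂⁵) + b (c₄⁵ - c₂⁵) = 0` reads `a c₃⁵ + b c₄⁵ - (a + b) c₂⁵ = 0`.
Since `c₂ c₃ c₄` has as many distinct roots as its degree, it is squarefree, so the `cᵢ` are
pairwise coprime. If one of `a`, `b`, `a + b` vanishes, two coprime `cᵢ` have equal fifth powers
and hence are units, which contradicts `d ≥ 1`. Otherwise the relation is a Fermat–Catalan
equation with exponents `(5, 5, 5)`, which by the Mason–Stothers theorem has no solutions in
nonconstant coprime polynomials (`Polynomial.flt_catalan`).
-/

open Polynomial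

theorem isUnit_of_pow_eq_pow_of_isCoprime {R : Type*} [CommSemiring R] {x y : R}
    (h : IsCoprime x y) {n : ℕ} (hn : n ≠ 0) (hxy : x ^ n = y ^ n) : IsUnit x := by
  have := h.pow (m := n) (n := n)
  rw [← hxy, isCoprime_self] at this
  exact (isUnit_pow_iff hn).mp this

theorem Squarefree.isCoprime_of_mul_mul {R : Type*} [CommRing R] [IsBezout R] {f g h : R}
    (hsq : Squarefree (f * g * h)) : IsCoprime f g ∧ IsCoprime f h ∧ IsCoprime g h :=
  have hfg_h := IsRelPrime.of_squarefree_mul hsq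
  ⟨(IsRelPrime.of_squarefree_mul hsq.of_mul_left).isCoprime, hfg_h.of_mul_left_left.isCoprime,
    hfg_h.of_mul_left_right.isCoprime⟩

theorem Polynomial.nodup_roots_of_injective {R : Type*} [CommRing R] [IsDomain R] {p : R[X]}
    (hp : p ≠ 0) {n : ℕ} (hn : p.natDegree ≤ n) {β : Fin n → R} (hβ : Function.Injective β)
    (hroot : ∀ i, p.IsRoot (β i)) : p.roots.Nodup := by
  classical
  have himage : Finset.univ.image β ⊆ p.roots.toFinset := by
    simpa [Finset.subset_iff, hp] using hroot
  have hcard := Finset.card_le_card himage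
  rw [Finset.card_image_of_injective _ hβ, Finset.card_univ, Fintype.card_fin] at hcard
  rw [← Multiset.toFinset_card_eq_card_iff_nodup]
  have hdedup := Multiset.toFinset_card_le p.roots
  have hroots := p.card_roots'
  omega

theorem Polynomial.squarefree_of_injective_roots {k : Type*} [Field k] [IsAlgClosed k] {p : k[X]}
    (hp : p ≠ 0) {n : ℕ} (hn : p.natDegree ≤ n) {β : Fin n → k} (hβ : Function.Injective β)
    (hroot : ∀ i, p.IsRoot (β i)) : Squarefree p :=
  ((nodup_roots_iff_of_splits hp (IsAlgClosed.splits p)).mp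
    (nodup_roots_of_injective hp hn hβ hroot)).squarefree

theorem Polynomial.linearIndependent_pow_sub_pow {k : Type*} [Field k] {n : ℕ} (hn : 3 ≤ n)
    (chn : (n : k) ≠ 0) {x y z : k[X]} (hx : 0 < x.natDegree) (hy : 0 < y.natDegree)
    (hz : 0 < z.natDegree) (hxy : IsCoprime x y) (hxz : IsCoprime x z) (hyz : IsCoprime y z) :
    LinearIndependent k ![y ^ n - x ^ n, z ^ n - x ^ n] := by
  have hn0 : n ≠ 0 := by omega
  have not_isUnit {p : k[X]} (hp : 0 < p.natDegree) : ¬IsUnit p :=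
    fun hu => hp.ne' (natDegree_eq_zero_of_isUnit hu)
  have pow_eq {u : k} (hu : u ≠ 0) {p q : k[X]} (h : C u * (p ^ n - q ^ n) = 0) : p ^ n = q ^ n :=
    sub_eq_zero.mp ((mul_eq_zero.mp h).resolve_left (C_ne_zero.mpr hu))
  rw [LinearIndependent.pair_iff]
  intro a b hab
  simp only [smul_eq_C_mul] at hab
  by_contra hne
  by_cases ha : a = 0
  · have hb : b ≠ 0 := fun hb => hne ⟨ha, hb⟩
    subst ha
    exact not_isUnit hx (isUnit_of_pow_eq_pow_of_isCoprime hxz hn0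
      (pow_eq hb (by simpa using hab)).symm)
  by_cases hb : b = 0
  · subst hb
    exact not_isUnit hx (isUnit_of_pow_eq_pow_of_isCoprime hxy hn0
      (pow_eq ha (by simpa using hab)).symm)
  by_cases hab0 : a + b = 0
  · obtain rfl : b = -a := by linear_combination hab0
    rw [map_neg] at hab
    exact not_isUnit hy (isUnit_of_pow_eq_pow_of_isCoprime hyz hn0
      (pow_eq ha (by linear_combination hab)))
  have hfermat : C a * y ^ n + C b * z ^ n + C (-(a + b)) * x ^ n = 0 := by
    simp only [map_neg, map_add]
    linear_combination hab
  have hconst := flt_catalan hn0 hn0 hn0 (by nlinarith) chn chn chn (ne_zero_of_natDegree_gt hy)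
    (ne_zero_of_natDegree_gt hz) (ne_zero_of_natDegree_gt hx) hyz ha hb (neg_ne_zero.mpr hab0)
    hfermat
  omega

/-- algebraic core of the emptiness of `V_{f_Fe}`.
Let `c², c³, c⁴ ∈ ℂ[t]` have degree `d` and suppose the product `c²·c³·c⁴` has `3d`
pairwise distinct roots.  Then `(c³)⁵ − (c²)⁵` and `(c⁴)⁵ − (c²)⁵` are linearly
independent over `ℂ`. -/
theorem stmt8 (d : ℕ) (hd : 1 ≤ d) (c₂ c₃ c₄ : Polynomial ℂ)
    (h₂ : c₂.natDegree = d) (h₃ : c₃.natDegree = d) (h₄ : c₄.natDegree = d)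
    (β : Fin (3 * d) → ℂ) (hβinj : Function.Injective β)
    (hβroot : ∀ i, (c₂ * c₃ * c₄).eval (β i) = 0) :
    LinearIndependent ℂ ![c₃ ^ 5 - c₂ ^ 5, c₄ ^ 5 - c₂ ^ 5] := by
  have hpos {c : ℂ[X]} (hc : c.natDegree = d) : 0 < c.natDegree := hc ▸ hd
  have hprod : c₂ * c₃ * c₄ ≠ 0 := mul_ne_zero (mul_ne_zero (ne_zero_of_natDegree_gt (hpos h₂))
    (ne_zero_of_natDegree_gt (hpos h₃))) (ne_zero_of_natDegree_gt (hpos h₄))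
  have hdeg : (c₂ * c₃ * c₄).natDegree ≤ 3 * d := by
    calc (c₂ * c₃ * c₄).natDegree ≤ c₂.natDegree + c₃.natDegree + c₄.natDegree :=
          natDegree_mul_le.trans (by gcongr; exact natDegree_mul_le)
      _ = 3 * d := by omega
  obtain ⟨h₂₃, h₂₄, h₃₄⟩ :=
    (squarefree_of_injective_roots hprod hdeg hβinj hβroot).isCoprime_of_mul_mul
  exact linearIndependent_pow_sub_pow (by norm_num) (by norm_num) (hpos h₂) (hpos h₃) (hpos h₄)
    h₂₃ h₂₄ h₃₄
end

section
/- Fix d ≥ 1. Let c^1, c^2, c^3, c^4 ∈ ℂ[t] be given by c^i(t) = y_i·∏_{j=1}^d (t − θ_i^j) with all y_i ≠ 0, where the 2d numbers θ_3^1, …, θ_3^d, θ_4^1, …, θ_4^d are pairwise distinct. Suppose h(t) = c^1(t)c^2(t) + c^3(t)c^4(t) has degree 2d and has 2d pairwise distinct roots β_1, …, β_{2d}, all nonzero, none of which is a root of c^3 or of c^4, and suppose c^3, c^4 are not proportional over ℂ. For x = (x_3, x_4) ∈ ℂ^d × ℂ^d define H_i(x) = c^1(β_i)c^2(β_i) +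 y_3 y_4·∏_{j=1}^d (β_i − x_3^j)·∏_{j=1}^d (β_i − x_4^j) for i = 1, …, 2d. Then the 2d×2d Jacobian matrix of (H_1, …, H_{2d}) with respect to (x_3^1, …, x_3^d, x_4^1, …, x_4^d), evaluated at x = (θ_3, θ_4), has nonzero determinant. -/
/-! Differentiating `∏ₖ (βᵢ - xₖ)` in `xⱼ` removes the factor `βᵢ - xⱼ`, so the `(i, j)` entry of
the Jacobian is `-c³(βᵢ)c⁴(βᵢ) / (βᵢ - γⱼ)`, where `γ = (θ₃, θ₄)` lists the roots of `c³c⁴`.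
The Jacobian is therefore a diagonal matrix with nonzero entries times the Cauchy matrix
`(1 / (βᵢ - γⱼ))`. The latter is nonsingular because the `βᵢ` are distinct, the `γⱼ` are distinct
and `βᵢ ≠ γⱼ`: a kernel vector `v` would give the polynomial `∑ⱼ vⱼ ∏_{k ≠ j} (t - γₖ)`, of
degree less than `2d`, vanishing at every `βᵢ`; hence it is zero, and evaluating it at `γⱼ`
gives `vⱼ = 0`. -/

open Polynomial Finset Function Matrix

theorem Matrix.det_of_inv_sub_ne_zero {K ι : Type*} [Field K] [Fintype ι] [DecidableEq ι]
    {b g : ι → K} (hb : Injective b) (hg : Injective g) (hbg : ∀ i j, b i ≠ g j) :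
    (Matrix.of fun i j => (b i - g j)⁻¹).det ≠ 0 := by
  intro hdet
  obtain ⟨v, hv, hMv⟩ := Matrix.exists_mulVec_eq_zero_iff.2 hdet
  set p : K[X] := ∑ j, v j • Lagrange.nodal (univ.erase j) g
  have hp_eval (x : K) : p.eval x = ∑ j, v j * ∏ k ∈ univ.erase j, (x - g k) := by
    simp [p, eval_finsetSum, Lagrange.eval_nodal]
  have hp_deg : p ∈ degreeLT K #(univ : Finset ι) := by
    refine Submodule.sum_mem _ fun j _ => Submodule.smul_mem _ _ ?_
    rw [mem_degreeLT, Lagrange.degree_nodal, card_erase_of_mem (mem_univ j)]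
    exact_mod_cast Nat.sub_lt (card_pos.2 ⟨j, mem_univ j⟩) one_pos
  have hp : p = 0 := by
    refine eq_zero_of_degree_lt_of_eval_index_eq_zero _ hb.injOn (mem_degreeLT.1 hp_deg)
      fun i _ => ?_
    have hprod (j) : ∏ k ∈ univ.erase j, (b i - g k) = (∏ k, (b i - g k)) * (b i - g j)⁻¹ := by
      rw [← mul_prod_erase univ _ (mem_univ j)]
      field_simp [sub_ne_zero.2 (hbg i j)]
    calc p.eval (b i) = (∏ k, (b i - g k)) * ((Matrix.of fun i j => (b i - g j)⁻¹) *ᵥ v) i := by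
          simp only [hp_eval, hprod, Matrix.mulVec, dotProduct, Matrix.of_apply, mul_sum]
          exact sum_congr rfl fun j _ => by ring
      _ = 0 := by rw [hMv, Pi.zero_apply, mul_zero]
  refine hv (funext fun j => ?_)
  have := hp_eval (g j)
  rw [hp, eval_zero, sum_eq_single j] at this
  · exact (mul_eq_zero.1 this.symm).resolve_right
      (prod_ne_zero_iff.2 fun k hk => sub_ne_zero.2 (hg.ne (ne_of_mem_erase hk).symm))
  · exact fun k _ hkj => mul_eq_zero_of_right _
      (prod_eq_zero (mem_erase.2 ⟨Ne.symm hkj, mem_univ j⟩) (sub_self _))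
  · exact fun hj => (hj (mem_univ j)).elim

section
variable {𝕜 : Type*} [NontriviallyNormedField 𝕜] {ι : Type*} [Fintype ι] [DecidableEq ι]

theorem hasFDerivAt_prod_const_sub (a : 𝕜) (θ : ι → 𝕜) :
    HasFDerivAt (fun x : ι → 𝕜 => ∏ j, (a - x j))
      (∑ k, (∏ j ∈ univ.erase k, (a - θ j)) •
        -ContinuousLinearMap.proj (R := 𝕜) (φ := fun _ : ι => 𝕜) k) θ :=
  HasFDerivAt.finsetProd fun k _ => (hasFDerivAt_apply k θ).const_sub a

theorem fderiv_prod_const_sub_single (a : 𝕜) (θ : ι → 𝕜) (k : ι) :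
    fderiv 𝕜 (fun x : ι → 𝕜 => ∏ j, (a - x j)) θ (Pi.single k 1) =
      -∏ j ∈ univ.erase k, (a - θ j) := by
  simp [(hasFDerivAt_prod_const_sub a θ).fderiv, Pi.single_apply]

theorem fderiv_prod_const_sub_mul_prod_const_sub (a : 𝕜) (θ θ' v w : ι → 𝕜) :
    fderiv 𝕜 (fun x : (ι → 𝕜) × (ι → 𝕜) => (∏ j, (a - x.1 j)) * ∏ j, (a - x.2 j)) (θ, θ')
        (v, w) =
      fderiv 𝕜 (fun x : ι → 𝕜 => ∏ j, (a - x j)) θ v * ∏ j, (a - θ' j) +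
        (∏ j, (a - θ j)) * fderiv 𝕜 (fun x : ι → 𝕜 => ∏ j, (a - x j)) θ' w := by
  have hP (z : ι → 𝕜) := (hasFDerivAt_prod_const_sub a z).differentiableAt.hasFDerivAt
  have h1 := (hP θ).comp (θ, θ') (hasFDerivAt_fst (𝕜 := 𝕜) (p := (θ, θ')))
  have h2 := (hP θ').comp (θ, θ') (hasFDerivAt_snd (𝕜 := 𝕜) (p := (θ, θ')))
  have hmul : HasFDerivAt
      (fun x : (ι → 𝕜) × (ι → 𝕜) => (∏ j, (a - x.1 j)) * ∏ j, (a - x.2 j)) _ (θ, θ') :=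
    h1.mul h2
  rw [hmul.fderiv]
  simp only [Function.comp_apply, _root_.add_apply, _root_.smul_apply,
    ContinuousLinearMap.comp_apply, ContinuousLinearMap.coe_fst', ContinuousLinearMap.coe_snd',
    smul_eq_mul]
  ring

theorem fderiv_prod_const_sub_mul_prod_const_sub_inl {a : 𝕜} {θ : ι → 𝕜} {k : ι} (hk : a ≠ θ k)
    (θ' : ι → 𝕜) :
    fderiv 𝕜 (fun x : (ι → 𝕜) × (ι → 𝕜) => (∏ j, (a - x.1 j)) * ∏ j, (a - x.2 j)) (θ, θ')
        (Pi.single k 1, 0) =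
      -((∏ j, (a - θ j)) * ∏ j, (a - θ' j)) / (a - θ k) := by
  rw [fderiv_prod_const_sub_mul_prod_const_sub, fderiv_prod_const_sub_single, map_zero,
    ← mul_prod_erase univ (fun j => a - θ j) (mem_univ k)]
  field_simp [sub_ne_zero.2 hk]
  ring

theorem fderiv_prod_const_sub_mul_prod_const_sub_inr (θ : ι → 𝕜) {a : 𝕜} {θ' : ι → 𝕜} {k : ι}
    (hk : a ≠ θ' k) :
    fderiv 𝕜 (fun x : (ι → 𝕜) × (ι → 𝕜) => (∏ j, (a - x.1 j)) * ∏ j, (a - x.2 j)) (θ, θ')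
        (0, Pi.single k 1) =
      -((∏ j, (a - θ j)) * ∏ j, (a - θ' j)) / (a - θ' k) := by
  rw [fderiv_prod_const_sub_mul_prod_const_sub, fderiv_prod_const_sub_single, map_zero,
    ← mul_prod_erase univ (fun j => a - θ' j) (mem_univ k)]
  field_simp [sub_ne_zero.2 hk]
  ring

end

theorem fderiv_pi_const_add_const_mul_apply {𝕜 E n : Type*} [NontriviallyNormedField 𝕜]
    [NormedAddCommGroup E] [NormedSpace 𝕜 E] [Fintype n] (A : n → 𝕜) (c : 𝕜) {f : n → E → 𝕜}
    {x : E} (hf : ∀ i, DifferentiableAt 𝕜 (f i) x) (v : E) (i : n) :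
    fderiv 𝕜 (fun x i => A i + c * f i x) x v i = c * fderiv 𝕜 (f i) x v := by
  rw [fderiv_pi fun i => ((hf i).const_mul c).const_add (A i), ContinuousLinearMap.pi_apply,
    fderiv_const_add, fderiv_const_mul (hf i)]
  rfl

theorem injective_dite_lt_of_injective_sumElim {α : Type*} {d : ℕ} {u w : Fin d → α}
    (h : Injective (Sum.elim u w)) :
    Injective fun j : Fin (2 * d) =>
      if hj : (j : ℕ) < d then u ⟨j, hj⟩ else w ⟨j - d, by omega⟩ := by
  let e : Fin (2 * d) → Fin d ⊕ Fin d := fun j =>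
    if hj : (j : ℕ) < d then .inl ⟨j, hj⟩ else .inr ⟨j - d, by omega⟩
  have he : Injective e := by
    intro j j' hjj
    simp only [e] at hjj
    split_ifs at hjj <;> simp [Fin.ext_iff] at hjj <;> omega
  convert h.comp he using 1
  funext j
  by_cases hj : (j : ℕ) < d <;> simp [e, hj]

theorem stmt10 (d : ℕ)
    (y : Fin 5 → ℂ) (θ : Fin 5 → Fin d → ℂ)
    (c : Fin 5 → Polynomial ℂ)
    (hc : ∀ i, c i = Polynomial.C (y i) * ∏ j, (Polynomial.X - Polynomial.C (θ i j)))
    (hθ34 : Function.Injective (Sum.elim (θ 3) (θ 4) : Fin d ⊕ Fin d → ℂ))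
    (β : Fin (2 * d) → ℂ)
    (hβinj : Function.Injective β)
    (hβ3 : ∀ i, (c 3).eval (β i) ≠ 0)
    (hβ4 : ∀ i, (c 4).eval (β i) ≠ 0) :
    Matrix.det
      (Matrix.of fun i j : Fin (2 * d) =>
        fderiv ℂ
          (fun x : (Fin d → ℂ) × (Fin d → ℂ) => fun i : Fin (2 * d) =>
            (c 1).eval (β i) * (c 2).eval (β i) +
              y 3 * y 4 * ((∏ j, (β i - x.1 j)) * ∏ j, (β i - x.2 j)))
          (θ 3, θ 4)
          (if hj : (j : ℕ) < d then (Pi.single (⟨j, hj⟩ : Fin d) 1, 0)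
           else (0, Pi.single (⟨(j : ℕ) - d, by have := j.2; omega⟩ : Fin d) 1))
          i) ≠ 0 := by
  have hev (n : Fin 5) (i : Fin (2 * d)) : (c n).eval (β i) = y n * ∏ j, (β i - θ n j) := by
    simp [hc, eval_prod]
  have hβθ {n : Fin 5} (hn : ∀ i, (c n).eval (β i) ≠ 0) (i : Fin (2 * d)) (k : Fin d) :
      β i ≠ θ n k :=
    fun h => hn i (by rw [hev, prod_eq_zero (mem_univ k) (sub_eq_zero.2 h), mul_zero])
  set γ : Fin (2 * d) → ℂ := fun j =>
    if hj : (j : ℕ) < d then θ 3 ⟨j, hj⟩ else θ 4 ⟨j - d, by omega⟩ with hγ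
  have hβγ (i j : Fin (2 * d)) : β i ≠ γ j := by
    simp only [hγ]
    split_ifs
    exacts [hβθ hβ3 i _, hβθ hβ4 i _]
  have hJ :
      (of fun i j => -((c 3).eval (β i) * (c 4).eval (β i)) * (β i - γ j)⁻¹).det ≠ 0 := by
    refine (det_mul_column _ (of fun i j => (β i - γ j)⁻¹)).trans_ne (mul_ne_zero ?_ ?_)
    · exact prod_ne_zero_iff.2 fun i _ => neg_ne_zero.2 (mul_ne_zero (hβ3 i) (hβ4 i))
    · exact det_of_inv_sub_ne_zero hβinj (injective_dite_lt_of_injective_sumElim hθ34) hβγ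
  convert hJ using 3
  funext i j
  rw [fderiv_pi_const_add_const_mul_apply _ _ (fun i => by fun_prop)]
  simp only [hγ]
  split_ifs with hj
  · rw [fderiv_prod_const_sub_mul_prod_const_sub_inl (hβθ hβ3 i _), hev, hev]
    ring
  · rw [fderiv_prod_const_sub_mul_prod_const_sub_inr _ (hβθ hβ4 i _), hev, hev]
    ring
end
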